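/- Let 0 < m < n be integers, t_k = kπ/(n+1), x_k = cos t_k, λ_{n,k} = (π/(n+1)) sin² t_k. Define Φ_{n,k}^m(x) = λ_{n,k} ∑_{j=0}^{n+m−1} μ_{n,j}^m p_j(w₂,x) p_j(w₂,x_k), where μ_{n,j}^m = 1 for 0 ≤ j ≤ n−m and μ_{n,j}^m = (n+m−j)/(2m) for n−m < j < n+m. Then for t ∈ (0,π) with t ∉ {t_1,…,t_n} and x = cos t, Φ_{n,k}^m(x) = ((−1)^k sin t_k/(4m(n+1))) · (sin((n+1)t)/sin t) · ( sin(m(t−t_k))/sin²((t−t_k)/2) − sin(m(t+t_k))/sin²((t+t_k)/2) ). -/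

import Mathlib

open Real

/-- Orthonormal Chebyshev polynomials of the second kind, as functions on `[-1,1]`:
`p_j(cos t) = √(2/π) sin((j+1)t)/sin t`. -/
noncomputable def chebP2 (j : ℕ) (x : ℝ) : ℝ :=
  Real.sqrt (2 / π) * (Real.sin ((j + 1) * Real.arccos x) / Real.sin (Real.arccos x))

/-- The de la Vallée Poussin filter. -/
noncomputable def vpFilter (n m j : ℕ) : ℝ :=
  if j + m ≤ n then 1 else ((n : ℝ) + m - j) / (2 * m)

/-- Chebyshev nodes of the second kind: `t_k = kπ/(n+1)`. -/
noncomputable def chebNode2 (n k : ℕ) : ℝ := (k : ℝ) * π / (n + 1)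

/-- Christoffel numbers for `w₂`: `λ_{n,k} = (π/(n+1)) sin² t_k`. -/
noncomputable def chebLambda2 (n k : ℕ) : ℝ := (π / (n + 1)) * Real.sin (chebNode2 n k) ^ 2

/-- Fundamental VP polynomials for `w₂`. -/
noncomputable def vpPhi2 (n m k : ℕ) (x : ℝ) : ℝ :=
  chebLambda2 n k * ∑ j ∈ Finset.range (n + m),
    vpFilter n m j * chebP2 j x * chebP2 j (Real.cos (chebNode2 n k))

/-!
Put `x = cos t`. The product-to-sum formula gives
`p_j(x) p_j(x_k) = (cos((j+1)(t-t_k)) - cos((j+1)(t+t_k))) / (π sin t sin t_k)`, so `Φ_{n,k}^m(x)`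
is a difference of two values of the kernel `V(u) = ∑_j μ_{n,j}^m cos((j+1)u)`. The de la Vallée
Poussin mean is the average of the partial sums of orders `n-m+1, …, n+m`; each partial sum is a
Dirichlet kernel, and averaging them telescopes once more, giving
`V(u) = sin((n+1)u) sin(mu) / (4m sin²(u/2)) - 1/2`. Finally
`sin((n+1)(t ∓ t_k)) = (-1)^k sin((n+1)t)`, and the two constants `-1/2` cancel.
-/

open Finset

theorem sin_add_half_mul_mul_two_sin_half (x u : ℝ) :
    sin ((x + 1 / 2) * u) * (2 * sin (u / 2)) = cos (x * u) - cos ((x + 1) * u) := by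
  have h := two_mul_sin_mul_sin ((x + 1 / 2) * u) (u / 2)
  rw [show (x + 1 / 2) * u - u / 2 = x * u by ring,
    show (x + 1 / 2) * u + u / 2 = (x + 1) * u by ring] at h
  linarith

theorem cos_mul_mul_two_sin_half (x u : ℝ) :
    cos (x * u) * (2 * sin (u / 2)) = sin ((x + 1 / 2) * u) - sin ((x - 1 / 2) * u) := by
  have h := two_mul_sin_mul_cos (u / 2) (x * u)
  rw [show u / 2 - x * u = -((x - 1 / 2) * u) by ring,
    show u / 2 + x * u = (x + 1 / 2) * u by ring, sin_neg] at h
  linarith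

theorem sum_range_cos_succ_mul_mul_two_sin_half (L : ℕ) (u : ℝ) :
    (∑ j ∈ range L, cos ((j + 1) * u)) * (2 * sin (u / 2))
      = sin ((L + 1 / 2) * u) - sin (u / 2) := by
  rw [sum_mul]
  simp_rw [cos_mul_mul_two_sin_half]
  convert sum_range_sub (fun j : ℕ => sin ((j + 1 / 2) * u)) L using 2 with j
  · push_cast; ring_nf
  · ring_nf

theorem sum_Ico_sin_add_half_mul_mul_two_sin_half {a b : ℕ} (hab : a ≤ b) (u : ℝ) :
    (∑ l ∈ Ico a b, sin ((l + 1 / 2) * u)) * (2 * sin (u / 2)) = cos (a * u) - cos (b * u) := by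
  rw [sum_mul]
  simp_rw [sin_add_half_mul_mul_two_sin_half]
  rw [← neg_sub, ← sum_Ico_sub (fun l : ℕ => cos (l * u)) hab, ← sum_neg_distrib]
  push_cast
  simp

theorem sum_Ico_sum_range_cos_mul_four_sin_sq {a b : ℕ} (hab : a ≤ b) (u : ℝ) :
    (∑ l ∈ Ico a b, ∑ j ∈ range l, cos ((j + 1) * u)) * (4 * sin (u / 2) ^ 2)
      = cos (a * u) - cos (b * u) - 2 * (b - a) * sin (u / 2) ^ 2 := by
  have hsplit : ∀ l : ℕ, (∑ j ∈ range l, cos ((j + 1) * u)) * (4 * sin (u / 2) ^ 2)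
      = sin ((l + 1 / 2) * u) * (2 * sin (u / 2)) - 2 * sin (u / 2) ^ 2 := fun l => by
    linear_combination (2 * sin (u / 2)) * sum_range_cos_succ_mul_mul_two_sin_half l u
  rw [sum_mul, sum_congr rfl fun l _ => hsplit l, sum_sub_distrib, ← sum_mul,
    sum_Ico_sin_add_half_mul_mul_two_sin_half hab, sum_const, Nat.card_Ico, nsmul_eq_mul,
    Nat.cast_sub hab]
  ring

theorem vpFilter_mul_two_mul {n m j : ℕ} (hm : 0 < m) (hmn : m ≤ n) (hj : j < n + m) :
    vpFilter n m j * (2 * m) = ((n + m + 1 - max (n - m + 1) (j + 1) : ℕ) : ℝ) := by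
  have hm' : (m : ℝ) ≠ 0 := by positivity
  unfold vpFilter
  split_ifs with h
  · rw [show n + m + 1 - max (n - m + 1) (j + 1) = 2 * m by omega]
    push_cast; ring
  · rw [show n + m + 1 - max (n - m + 1) (j + 1) = n + m - j by omega, Nat.cast_sub hj.le]
    field_simp
    push_cast; ring

theorem sum_vpFilter_mul {n m : ℕ} (hm : 0 < m) (hmn : m ≤ n) (f : ℕ → ℝ) :
    ∑ j ∈ range (n + m), vpFilter n m j * f j
      = (∑ l ∈ Ico (n - m + 1) (n + m + 1), ∑ j ∈ range l, f j) / (2 * m) := by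
  rw [eq_div_iff (by positivity), sum_mul,
    sum_comm' (t' := range (n + m)) (s' := fun j => Ico (max (n - m + 1) (j + 1)) (n + m + 1))]
  · refine sum_congr rfl fun j hj => ?_
    rw [sum_const, Nat.card_Ico, nsmul_eq_mul, ← vpFilter_mul_two_mul hm hmn (mem_range.mp hj)]
    ring
  · intro l j
    simp only [mem_Ico, mem_range, max_le_iff]
    omega

noncomputable def vpKernel (n m : ℕ) (u : ℝ) : ℝ :=
  ∑ j ∈ range (n + m), vpFilter n m j * cos ((j + 1) * u)

theorem vpKernel_eq {n m : ℕ} (hm : 0 < m) (hmn : m ≤ n) {u : ℝ} (hu : sin (u / 2) ≠ 0) :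
    vpKernel n m u = sin ((n + 1) * u) * sin (m * u) / (4 * m * sin (u / 2) ^ 2) - 1 / 2 := by
  have h := sum_Ico_sum_range_cos_mul_four_sin_sq (show n - m + 1 ≤ n + m + 1 by omega) u
  have hcos : cos (((n - m + 1 : ℕ) : ℝ) * u) - cos (((n + m + 1 : ℕ) : ℝ) * u)
      = 2 * sin ((n + 1) * u) * sin (m * u) := by
    rw [two_mul_sin_mul_sin, Nat.cast_add, Nat.cast_sub hmn]
    push_cast
    ring_nf
  have hba : ((n + m + 1 : ℕ) : ℝ) - ((n - m + 1 : ℕ) : ℝ) = 2 * m := by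
    push_cast [Nat.cast_sub hmn]
    ring
  rw [hcos, hba] at h
  rw [vpKernel, sum_vpFilter_mul hm hmn, div_sub' (by positivity), div_eq_div_iff (by positivity)
    (by positivity)]
  linear_combination (m : ℝ) * h

theorem chebNode2_mem_Icc {n k : ℕ} (hk : k ≤ n + 1) : chebNode2 n k ∈ Set.Icc 0 π := by
  have hk' : (k : ℝ) ≤ n + 1 := by exact_mod_cast hk
  refine ⟨by unfold chebNode2; positivity, ?_⟩
  rw [chebNode2, div_le_iff₀ (by positivity)]
  nlinarith [pi_pos]

theorem succ_mul_chebNode2 (n k : ℕ) : ((n : ℝ) + 1) * chebNode2 n k = k * π := by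
  unfold chebNode2
  field_simp

theorem sin_succ_mul_sub_chebNode2 (n k : ℕ) (t : ℝ) :
    sin ((n + 1) * (t - chebNode2 n k)) = (-1) ^ k * sin ((n + 1) * t) := by
  rw [mul_sub, succ_mul_chebNode2, sin_sub_nat_mul_pi]

theorem sin_succ_mul_add_chebNode2 (n k : ℕ) (t : ℝ) :
    sin ((n + 1) * (t + chebNode2 n k)) = (-1) ^ k * sin ((n + 1) * t) := by
  rw [mul_add, succ_mul_chebNode2, sin_add_nat_mul_pi]

theorem chebP2_cos_mul_chebP2_cos (j : ℕ) {t s : ℝ} (ht : t ∈ Set.Icc 0 π)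
    (hs : s ∈ Set.Icc 0 π) :
    chebP2 j (cos t) * chebP2 j (cos s)
      = (cos ((j + 1) * (t - s)) - cos ((j + 1) * (t + s))) / (π * sin t * sin s) := by
  have hsqrt : √(2 / π) * √(2 / π) = 2 / π := mul_self_sqrt (by positivity)
  rw [chebP2, chebP2, arccos_cos ht.1 ht.2, arccos_cos hs.1 hs.2, mul_sub, mul_add,
    ← two_mul_sin_mul_sin]
  linear_combination (sin ((j + 1) * t) / sin t * (sin ((j + 1) * s) / sin s)) * hsqrt

theorem vpPhi2_cos_eq {n m k : ℕ} (hk : k ≤ n + 1) {t : ℝ} (ht : t ∈ Set.Icc 0 π) :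
    vpPhi2 n m k (cos t) = sin (chebNode2 n k) / ((n + 1) * sin t)
      * (vpKernel n m (t - chebNode2 n k) - vpKernel n m (t + chebNode2 n k)) := by
  rw [vpPhi2, chebLambda2, vpKernel, vpKernel, ← sum_sub_distrib, mul_sum, mul_sum]
  refine sum_congr rfl fun j _ => ?_
  rw [mul_assoc (vpFilter n m j), chebP2_cos_mul_chebP2_cos j ht (chebNode2_mem_Icc hk)]
  rcases eq_or_ne (sin (chebNode2 n k)) 0 with hτ | hτ
  · simp [hτ]
  · field_simp

/-- compact trigonometric form of the fundamental VP polynomials for `w₂`. -/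
theorem stmt_10 (m n : ℕ) (hm : 0 < m) (hmn : m < n)
    (k : ℕ) (hk1 : 1 ≤ k) (hkn : k ≤ n)
    (t : ℝ) (ht : t ∈ Set.Ioo 0 π)
    (htk : ∀ k' : ℕ, 1 ≤ k' → k' ≤ n → t ≠ chebNode2 n k') :
    vpPhi2 n m k (Real.cos t) =
      ((-1 : ℝ) ^ k * Real.sin (chebNode2 n k) / (4 * m * (n + 1))) *
        (Real.sin ((n + 1) * t) / Real.sin t) *
        (Real.sin (m * (t - chebNode2 n k)) / Real.sin ((t - chebNode2 n k) / 2) ^ 2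
          - Real.sin (m * (t + chebNode2 n k)) / Real.sin ((t + chebNode2 n k) / 2) ^ 2) := by
  obtain ⟨hτ0, hτπ⟩ := chebNode2_mem_Icc (n := n) (by omega : k ≤ n + 1)
  have hsub : sin ((t - chebNode2 n k) / 2) ≠ 0 := by
    rw [Ne, sin_eq_zero_iff_of_lt_of_lt (by linarith [ht.1]) (by linarith [ht.2])]
    exact fun h => htk k hk1 hkn (by linarith)
  have hadd : sin ((t + chebNode2 n k) / 2) ≠ 0 :=
    (sin_pos_of_pos_of_lt_pi (by linarith [ht.1]) (by linarith [ht.2])).ne'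
  have hm' : (m : ℝ) ≠ 0 := by positivity
  rw [vpPhi2_cos_eq (by omega) (Set.Ioo_subset_Icc_self ht), vpKernel_eq hm hmn.le hsub,
    vpKernel_eq hm hmn.le hadd, sin_succ_mul_sub_chebNode2, sin_succ_mul_add_chebNode2]
  field_simp
  ring
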